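/- For every z ∈ ℂ ∖ ℝ+ the matrices Γ(z)⁻¹ − z A Γ̃(z) Aᵀ and Γ̃(z)⁻¹ − z Aᵀ Γ(z) A are invertible, and the matrix-valued functions Υ(z) = (Γ(z)⁻¹ − z A Γ̃(z) Aᵀ)⁻¹ and Υ̃(z) = (Γ̃(z)⁻¹ − z Aᵀ Γ(z) A)⁻¹ are analytic (entrywise holomorphic) on ℂ ∖ ℝ+. -/

import Mathlib

open MeasureTheory Matrix Complex Filter
open scoped Topology ComplexOrder

noncomputable section

/-- The set `ℂ ∖ ℝ₊`. -/
def offRplus : Set ℂ := {z : ℂ | ¬ (z.im = 0 ∧ 0 ≤ z.re)}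

/-- `f` is the Stieltjes transform of a probability measure carried by `ℝ₊`. -/
def IsStieltjesPM (f : ℂ → ℂ) : Prop :=
  ∃ μ : Measure ℝ, IsProbabilityMeasure μ ∧ μ (Set.Iio 0) = 0 ∧
    ∀ z ∈ offRplus, f z = ∫ t, ((t : ℂ) - z)⁻¹ ∂μ
def Tmat {N n : ℕ} (A : Matrix (Fin N) (Fin n) ℝ)
    (ψ : Fin N → ℂ → ℂ) (ψt : Fin n → ℂ → ℂ) (z : ℂ) : Matrix (Fin N) (Fin N) ℂ :=
  ((Matrix.diagonal fun i => ψ i z)⁻¹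
    - z • (A.map Complex.ofReal * Matrix.diagonal (fun j => ψt j z) * (A.map Complex.ofReal)ᵀ))⁻¹

def Ttmat {N n : ℕ} (A : Matrix (Fin N) (Fin n) ℝ)
    (ψ : Fin N → ℂ → ℂ) (ψt : Fin n → ℂ → ℂ) (z : ℂ) : Matrix (Fin n) (Fin n) ℂ :=
  ((Matrix.diagonal fun j => ψt j z)⁻¹
    - z • ((A.map Complex.ofReal)ᵀ * Matrix.diagonal (fun i => ψ i z) * A.map Complex.ofReal))⁻¹

def SolvesSystem {N n : ℕ} (σ : Fin N → Fin n → ℝ) (A : Matrix (Fin N) (Fin n) ℝ)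
    (ψ : Fin N → ℂ → ℂ) (ψt : Fin n → ℂ → ℂ) : Prop :=
  (∀ i, IsStieltjesPM (ψ i)) ∧ (∀ j, IsStieltjesPM (ψt j)) ∧
  ∀ z ∈ offRplus,
    (∀ i, ψ i z
      = -(z * (1 + (n : ℂ)⁻¹
          * ((Matrix.diagonal fun j => ((σ i j : ℂ))^2) * Ttmat A ψ ψt z).trace))⁻¹) ∧
    (∀ j, ψt j z
      = -(z * (1 + (n : ℂ)⁻¹
          * ((Matrix.diagonal fun i => ((σ i j : ℂ))^2) * Tmat A ψ ψt z).trace))⁻¹)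

/-! Fix `z ∉ ℝ₊` and a rotation `c` with `0 ≤ re c` and `re (c z) < 0`, e.g. `c = ‖z‖ - z̄`
(then `c z = ‖z‖ (z - ‖z‖)`). For every `t ≥ 0` the kernel `(t - z)⁻¹` satisfies
`re (c̄ (t - z)⁻¹) > 0` and `re (c z (t - z)⁻¹) ≤ 0`, so after integrating, every Stieltjes
transform `γ` of a probability measure on `ℝ₊` has `re (c / γ z) > 0` and `re (c z γ z) ≤ 0`.
Hence for `x ≠ 0`,
`re (c x* (Γ⁻¹ - z A Γ̃ Aᵀ) x) = ∑ |xᵢ|² re (c / γᵢ) - ∑ |(Aᵀx)ⱼ|² re (c z γ̃ⱼ) > 0`,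
so the matrix has trivial kernel. Holomorphy follows from that of the `γᵢ`, `γ̃ⱼ`
(Mathlib's resolvent transform) and Cramer's rule. -/

open ComplexConjugate

lemma MeasureTheory.integral_pos_of_ae_pos {α : Type*} [MeasurableSpace α] {μ : Measure α}
    [NeZero μ] {f : α → ℝ} (hfi : Integrable f μ) (hf : ∀ᵐ x ∂μ, 0 < f x) : 0 < ∫ x, f x ∂μ := by
  refine (integral_pos_iff_support_of_nonneg_ae (hf.mono fun _ h => h.le) hfi).mpr ?_
  have : Function.support f =ᵐ[μ] Set.univ :=
    ae_eq_univ.mpr (ae_iff.mp (hf.mono fun _ h => h.ne'))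
  rw [measure_congr this]
  exact (NeZero.ne (μ Set.univ)).bot_lt

namespace Complex

lemma re_mul_inv (c w : ℂ) : (c * w⁻¹).re = (conj c * w).re / normSq w := by
  rw [Complex.inv_def, ← mul_assoc, re_mul_ofReal, div_eq_mul_inv, ← conj_re, map_mul, conj_conj]

lemma re_mul_sum_ofReal_mul {α : Type*} (s : Finset α) (c : ℂ) (r : α → ℝ) (w : α → ℂ) :
    (c * ∑ a ∈ s, (r a : ℂ) * w a).re = ∑ a ∈ s, r a * (c * w a).re := by
  simp only [Finset.mul_sum, re_sum, mul_left_comm c, re_ofReal_mul]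

end Complex

namespace Matrix

lemma conjTranspose_map_ofReal {ι κ : Type*} (A : Matrix ι κ ℝ) :
    (A.map ofReal)ᴴ = (A.map ofReal)ᵀ := by
  ext; simp

lemma inv_diagonal_eq_diagonal_inv {ι K : Type*} [Fintype ι] [DecidableEq ι] [Field K]
    {v : ι → K} (hv : ∀ i, v i ≠ 0) : (diagonal v)⁻¹ = diagonal fun i => (v i)⁻¹ :=
  inv_eq_left_inv (by simp [diagonal_mul_diagonal, hv])

variable {ι κ : Type*} [Fintype ι] [Fintype κ] [DecidableEq ι] [DecidableEq κ]

lemma isUnit_of_re_mul_star_dotProduct_mulVec_pos (M : Matrix ι ι ℂ) (c : ℂ)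
    (h : ∀ x ≠ 0, 0 < (c * (star x ⬝ᵥ M *ᵥ x)).re) : IsUnit M := by
  rw [isUnit_iff_isUnit_det, isUnit_iff_ne_zero]
  intro hdet
  obtain ⟨x, hx, hMx⟩ := exists_mulVec_eq_zero_iff.mpr hdet
  simpa [hMx] using h x hx

lemma star_dotProduct_diagonal_mulVec (d x : ι → ℂ) :
    star x ⬝ᵥ diagonal d *ᵥ x = ∑ i, (normSq (x i) : ℂ) * d i := by
  simp only [dotProduct, mulVec_diagonal, Pi.star_apply, normSq_eq_conj_mul_self]
  exact Finset.sum_congr rfl fun i _ => by simp only [RCLike.star_def]; ring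

lemma star_dotProduct_diagonal_sub_smul_mul_diagonal_mul_conjTranspose_mulVec
    (d : ι → ℂ) (e : κ → ℂ) (B : Matrix ι κ ℂ) (z : ℂ) (x : ι → ℂ) :
    star x ⬝ᵥ (diagonal d - z • (B * diagonal e * Bᴴ)) *ᵥ x
      = ∑ i, (normSq (x i) : ℂ) * d i - ∑ j, (normSq ((Bᴴ *ᵥ x) j) : ℂ) * (z * e j) := by
  have hB : star x ⬝ᵥ (B * diagonal e * Bᴴ) *ᵥ x
      = star (Bᴴ *ᵥ x) ⬝ᵥ diagonal e *ᵥ (Bᴴ *ᵥ x) := by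
    rw [← mulVec_mulVec, ← mulVec_mulVec, dotProduct_mulVec, star_mulVec,
      conjTranspose_conjTranspose]
  rw [sub_mulVec, dotProduct_sub, smul_mulVec, dotProduct_smul, smul_eq_mul, hB,
    star_dotProduct_diagonal_mulVec, star_dotProduct_diagonal_mulVec, Finset.mul_sum]
  simp only [mul_left_comm z]

lemma isUnit_diagonal_sub_smul_mul_diagonal_mul_conjTranspose {d : ι → ℂ} {e : κ → ℂ}
    {z c : ℂ} (B : Matrix ι κ ℂ) (hd : ∀ i, 0 < (c * d i).re)
    (he : ∀ j, (c * (z * e j)).re ≤ 0) :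
    IsUnit (diagonal d - z • (B * diagonal e * Bᴴ)) := by
  refine isUnit_of_re_mul_star_dotProduct_mulVec_pos _ c fun x hx => ?_
  obtain ⟨i₀, hi₀⟩ := Function.ne_iff.mp hx
  rw [star_dotProduct_diagonal_sub_smul_mul_diagonal_mul_conjTranspose_mulVec, mul_sub, sub_re,
    re_mul_sum_ofReal_mul, re_mul_sum_ofReal_mul, sub_pos]
  calc ∑ j, normSq ((Bᴴ *ᵥ x) j) * (c * (z * e j)).re
      ≤ 0 := Finset.sum_nonpos fun j _ => mul_nonpos_of_nonneg_of_nonpos (normSq_nonneg _) (he j)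
    _ < ∑ i, normSq (x i) * (c * d i).re :=
      Finset.sum_pos' (fun i _ => mul_nonneg (normSq_nonneg _) (hd i).le)
        ⟨i₀, Finset.mem_univ _, mul_pos (normSq_pos.mpr hi₀) (hd i₀)⟩

end Matrix

section EntrywiseDifferentiable

variable {𝕜 : Type*} [NontriviallyNormedField 𝕜] {s : Set 𝕜} {l m n : Type*}

lemma DifferentiableOn.matrix_mul [Fintype m] {M : 𝕜 → Matrix l m 𝕜} {N : 𝕜 → Matrix m n 𝕜}
    (hM : ∀ i j, DifferentiableOn 𝕜 (fun x => M x i j) s)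
    (hN : ∀ i j, DifferentiableOn 𝕜 (fun x => N x i j) s) (i : l) (k : n) :
    DifferentiableOn 𝕜 (fun x => (M x * N x) i k) s := by
  simp only [mul_apply]
  exact DifferentiableOn.fun_sum fun j _ => (hM i j).mul (hN j k)

variable [DecidableEq n]

lemma DifferentiableOn.matrix_diagonal {d : n → 𝕜 → 𝕜} (hd : ∀ i, DifferentiableOn 𝕜 (d i) s)
    (i j : n) : DifferentiableOn 𝕜 (fun x => diagonal (fun k => d k x) i j) s := by
  by_cases h : i = j
  · simpa [h] using hd j
  · simp [h, differentiableOn_const]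

variable [Fintype n]

lemma DifferentiableOn.matrix_det {M : 𝕜 → Matrix n n 𝕜}
    (hM : ∀ i j, DifferentiableOn 𝕜 (fun x => M x i j) s) :
    DifferentiableOn 𝕜 (fun x => (M x).det) s := by
  simp only [det_apply, Units.smul_def, zsmul_eq_mul]
  exact DifferentiableOn.fun_sum fun σ _ =>
    (DifferentiableOn.fun_finsetProd fun i _ => hM (σ i) i).const_mul _

lemma DifferentiableOn.matrix_adjugate {M : 𝕜 → Matrix n n 𝕜}
    (hM : ∀ i j, DifferentiableOn 𝕜 (fun x => M x i j) s) (i j : n) :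
    DifferentiableOn 𝕜 (fun x => (M x).adjugate i j) s := by
  simp only [adjugate_apply]
  refine DifferentiableOn.matrix_det fun k l => ?_
  by_cases hk : k = j
  · simp [hk, differentiableOn_const]
  · simpa [hk] using hM k l

lemma DifferentiableOn.matrix_inv {M : 𝕜 → Matrix n n 𝕜}
    (hM : ∀ i j, DifferentiableOn 𝕜 (fun x => M x i j) s) (hdet : ∀ x ∈ s, IsUnit (M x))
    (i j : n) : DifferentiableOn 𝕜 (fun x => (M x)⁻¹ i j) s := by
  simp only [Matrix.inv_def, Matrix.smul_apply, Ring.inverse_eq_inv', smul_eq_mul]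
  exact ((DifferentiableOn.matrix_det hM).inv fun x hx => ((isUnit_iff_isUnit_det _).mp
    (hdet x hx)).ne_zero).mul (DifferentiableOn.matrix_adjugate hM i j)

end EntrywiseDifferentiable

lemma ofReal_ne_of_mem_offRplus {z : ℂ} (hz : z ∈ offRplus) {t : ℝ} (ht : 0 ≤ t) :
    (t : ℂ) ≠ z := by
  rintro rfl
  exact hz ⟨ofReal_im t, ht⟩

lemma exists_re_nonneg_re_mul_neg {z : ℂ} (hz : z ∈ offRplus) :
    ∃ c : ℂ, 0 ≤ c.re ∧ (c * z).re < 0 := by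
  have hz0 : z ≠ 0 := fun h => hz (by simp [h])
  have hre : z.re < ‖z‖ := by
    by_cases him : z.im = 0
    · have : z.re < 0 := lt_of_not_ge fun h => hz ⟨him, h⟩
      linarith [norm_nonneg z]
    · exact (le_abs_self _).trans_lt (abs_re_lt_norm.mpr him)
  refine ⟨(‖z‖ : ℂ) - conj z, by simpa using re_le_norm z, ?_⟩
  have : ((‖z‖ : ℂ) - conj z) * z = ‖z‖ * (z - ‖z‖) := by
    rw [sub_mul, conj_mul', mul_sub, sq]
  rw [this, re_ofReal_mul, sub_re, ofReal_re]
  exact mul_neg_of_pos_of_neg (norm_pos_iff.mpr hz0) (by linarith)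

section Kernel

variable {c z : ℂ} {t : ℝ}

lemma re_conj_mul_inv_ofReal_sub_pos (hc : 0 ≤ c.re) (hcz : (c * z).re < 0) (ht : 0 ≤ t) :
    0 < (conj c * ((t : ℂ) - z)⁻¹).re := by
  have hw : 0 < (c * ((t : ℂ) - z)).re := by
    rw [mul_sub, sub_re, mul_comm, re_ofReal_mul]; nlinarith
  rw [re_mul_inv, conj_conj]
  refine div_pos hw (normSq_pos.mpr fun h => ?_)
  simp [h] at hw

lemma re_mul_mul_inv_ofReal_sub_nonpos (hc : 0 ≤ c.re) (hcz : (c * z).re < 0) (ht : 0 ≤ t) :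
    (c * (z * ((t : ℂ) - z)⁻¹)).re ≤ 0 := by
  rw [← mul_assoc, re_mul_inv]
  refine div_nonpos_of_nonpos_of_nonneg ?_ (normSq_nonneg _)
  have : conj (c * z) * ((t : ℂ) - z) = t * conj (c * z) - normSq z * conj c := by
    rw [map_mul, normSq_eq_conj_mul_self]; ring
  rw [this, sub_re, re_ofReal_mul, re_ofReal_mul, conj_re, conj_re]
  nlinarith [normSq_nonneg z]

end Kernel

section StieltjesTransform

variable {μ : Measure ℝ} {z c : ℂ}

lemma offRplus_subset_compl_image_support (hμ : ∀ᵐ t ∂μ, 0 ≤ t) :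
    offRplus ⊆ (algebraMap ℝ ℂ '' μ.support)ᶜ := by
  rintro z hz ⟨t, ht, rfl⟩
  exact ofReal_ne_of_mem_offRplus hz (Measure.support_subset_of_isClosed isClosed_Ici hμ ht) rfl

lemma resolvent_ofReal_eq (z : ℂ) : resolvent z = fun t : ℝ => ((t : ℂ) - z)⁻¹ := by
  ext t
  simp [resolvent, Ring.inverse_eq_inv']

lemma integrable_inv_ofReal_sub [IsFiniteMeasure μ] (hμ : ∀ᵐ t ∂μ, 0 ≤ t) (hz : z ∈ offRplus) :
    Integrable (fun t : ℝ => ((t : ℂ) - z)⁻¹) μ :=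
  resolvent_ofReal_eq z ▸ integrable_resolvent (offRplus_subset_compl_image_support hμ hz)

lemma differentiableOn_integral_inv_ofReal_sub [IsFiniteMeasure μ] (hμ : ∀ᵐ t ∂μ, 0 ≤ t) :
    DifferentiableOn ℂ (fun z => ∫ t, ((t : ℂ) - z)⁻¹ ∂μ) offRplus := by
  simp_rw [← resolvent_ofReal_eq]
  exact analyticOn_resolventTransform.differentiableOn.mono
    (offRplus_subset_compl_image_support hμ)

lemma re_integral_const_mul {f : ℝ → ℂ} (hf : Integrable f μ) (c : ℂ) :
    (c * ∫ t, f t ∂μ).re = ∫ t, (c * f t).re ∂μ := by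
  rw [← integral_const_mul]
  exact (integral_re (hf.const_mul c)).symm

lemma re_conj_mul_integral_inv_ofReal_sub_pos [IsProbabilityMeasure μ]
    (hμ : ∀ᵐ t ∂μ, 0 ≤ t) (hz : z ∈ offRplus) (hc : 0 ≤ c.re) (hcz : (c * z).re < 0) :
    0 < (conj c * ∫ t, ((t : ℂ) - z)⁻¹ ∂μ).re := by
  have hi := integrable_inv_ofReal_sub hμ hz
  rw [re_integral_const_mul hi]
  exact integral_pos_of_ae_pos (hi.const_mul _).re
    (hμ.mono fun t ht => re_conj_mul_inv_ofReal_sub_pos hc hcz ht)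

lemma re_mul_mul_integral_inv_ofReal_sub_nonpos [IsFiniteMeasure μ]
    (hμ : ∀ᵐ t ∂μ, 0 ≤ t) (hz : z ∈ offRplus) (hc : 0 ≤ c.re) (hcz : (c * z).re < 0) :
    (c * (z * ∫ t, ((t : ℂ) - z)⁻¹ ∂μ)).re ≤ 0 := by
  have hi := (integrable_inv_ofReal_sub hμ hz).const_mul z
  rw [← integral_const_mul, re_integral_const_mul hi]
  exact integral_nonpos_of_ae (hμ.mono fun t ht => re_mul_mul_inv_ofReal_sub_nonpos hc hcz ht)

end StieltjesTransform

namespace IsStieltjesPM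

variable {f : ℂ → ℂ} {z c : ℂ}

lemma exists_integral_rep (hf : IsStieltjesPM f) :
    ∃ μ : Measure ℝ, IsProbabilityMeasure μ ∧ (∀ᵐ t ∂μ, 0 ≤ t) ∧
      ∀ z ∈ offRplus, f z = ∫ t, ((t : ℂ) - z)⁻¹ ∂μ := by
  obtain ⟨μ, hμ, hμ0, hrep⟩ := hf
  refine ⟨μ, hμ, ae_iff.mpr ?_, hrep⟩
  simpa only [not_le, Set.Iio_def] using hμ0

lemma differentiableOn (hf : IsStieltjesPM f) : DifferentiableOn ℂ f offRplus := by
  obtain ⟨μ, _, hμ, hrep⟩ := hf.exists_integral_rep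
  exact (differentiableOn_integral_inv_ofReal_sub hμ).congr hrep

lemma re_mul_inv_pos (hf : IsStieltjesPM f) (hz : z ∈ offRplus) (hc : 0 ≤ c.re)
    (hcz : (c * z).re < 0) : 0 < (c * (f z)⁻¹).re := by
  obtain ⟨μ, _, hμ, hrep⟩ := hf.exists_integral_rep
  have hpos := re_conj_mul_integral_inv_ofReal_sub_pos hμ hz hc hcz
  rw [hrep z hz, re_mul_inv]
  refine div_pos hpos (normSq_pos.mpr fun h => ?_)
  simp [h] at hpos

lemma re_mul_mul_nonpos (hf : IsStieltjesPM f) (hz : z ∈ offRplus) (hc : 0 ≤ c.re)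
    (hcz : (c * z).re < 0) : (c * (z * f z)).re ≤ 0 := by
  obtain ⟨μ, _, hμ, hrep⟩ := hf.exists_integral_rep
  rw [hrep z hz]
  exact re_mul_mul_integral_inv_ofReal_sub_nonpos hμ hz hc hcz

lemma ne_zero (hf : IsStieltjesPM f) (hz : z ∈ offRplus) : f z ≠ 0 := by
  obtain ⟨c, hc, hcz⟩ := exists_re_nonneg_re_mul_neg hz
  intro h
  simpa [h] using hf.re_mul_inv_pos hz hc hcz

end IsStieltjesPM

lemma differentiableOn_inv_diagonal_sub_smul_mul_diagonal_mul_apply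
    {𝕜 ι κ : Type*} [NontriviallyNormedField 𝕜] [Fintype ι] [Fintype κ] [DecidableEq ι]
    [DecidableEq κ] {s : Set 𝕜} {g : ι → 𝕜 → 𝕜} {h : κ → 𝕜 → 𝕜}
    (B : Matrix ι κ 𝕜) (C : Matrix κ ι 𝕜) (hg : ∀ i, DifferentiableOn 𝕜 (g i) s)
    (hg0 : ∀ i, ∀ x ∈ s, g i x ≠ 0) (hh : ∀ j, DifferentiableOn 𝕜 (h j) s) (i k : ι) :
    DifferentiableOn 𝕜
      (fun x => ((diagonal fun i => g i x)⁻¹ - x • (B * diagonal (fun j => h j x) * C)) i k) s := by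
  have hdiag : ∀ x ∈ s, IsUnit (diagonal fun i => g i x) := fun x hx =>
    isUnit_diagonal.mpr (Pi.isUnit_iff.mpr fun i => (hg0 i x hx).isUnit)
  have hinv := DifferentiableOn.matrix_inv (DifferentiableOn.matrix_diagonal hg) hdiag i k
  have hBe := DifferentiableOn.matrix_mul (M := fun _ => B) (fun _ _ => differentiableOn_const _)
    (DifferentiableOn.matrix_diagonal hh)
  have hBeC := DifferentiableOn.matrix_mul hBe (N := fun _ => C)
    (fun _ _ => differentiableOn_const _) i k
  simp only [Matrix.sub_apply, Matrix.smul_apply, smul_eq_mul]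
  exact hinv.sub (differentiableOn_id.mul hBeC)

lemma isUnit_inv_diagonal_sub_smul_mul_diagonal_mul_transpose {ι κ : Type*} [Fintype ι]
    [Fintype κ] [DecidableEq ι] [DecidableEq κ] {γ : ι → ℂ → ℂ} {γt : κ → ℂ → ℂ} (A : Matrix ι κ ℝ)
    (hγ : ∀ i, IsStieltjesPM (γ i)) (hγt : ∀ j, IsStieltjesPM (γt j)) {z : ℂ}
    (hz : z ∈ offRplus) :
    IsUnit ((diagonal fun i => γ i z)⁻¹
      - z • (A.map ofReal * diagonal (fun j => γt j z) * (A.map ofReal)ᵀ)) := by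
  obtain ⟨c, hc, hcz⟩ := exists_re_nonneg_re_mul_neg hz
  rw [inv_diagonal_eq_diagonal_inv fun i => (hγ i).ne_zero hz, ← conjTranspose_map_ofReal]
  exact isUnit_diagonal_sub_smul_mul_diagonal_mul_conjTranspose _
    (fun i => (hγ i).re_mul_inv_pos hz hc hcz) (fun j => (hγt j).re_mul_mul_nonpos hz hc hcz)

lemma differentiableOn_Tmat_apply {N n : ℕ} (A : Matrix (Fin N) (Fin n) ℝ)
    {γ : Fin N → ℂ → ℂ} {γt : Fin n → ℂ → ℂ}
    (hγ : ∀ i, IsStieltjesPM (γ i)) (hγt : ∀ j, IsStieltjesPM (γt j)) (i j : Fin N) :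
    DifferentiableOn ℂ (fun z => Tmat A γ γt z i j) offRplus :=
  DifferentiableOn.matrix_inv
    (differentiableOn_inv_diagonal_sub_smul_mul_diagonal_mul_apply _ _
      (fun i => (hγ i).differentiableOn) (fun i _ hz => (hγ i).ne_zero hz)
      (fun j => (hγt j).differentiableOn))
    (fun _ hz => isUnit_inv_diagonal_sub_smul_mul_diagonal_mul_transpose A hγ hγt hz) i j

lemma Ttmat_eq_Tmat_transpose {N n : ℕ} (A : Matrix (Fin N) (Fin n) ℝ)
    (γ : Fin N → ℂ → ℂ) (γt : Fin n → ℂ → ℂ) : Ttmat A γ γt = Tmat Aᵀ γt γ := by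
  ext z : 1
  simp only [Tmat, Ttmat, transpose_map, transpose_transpose]

/-- Proposition 5.1 part 1: for Stieltjes transforms `γ_i, γ̃_j` of probability
measures on `ℝ₊`, the matrices `Γ⁻¹ - zAΓ̃Aᵀ` and `Γ̃⁻¹ - zAᵀΓA` are invertible on
`ℂ ∖ ℝ₊`, and `Υ = (Γ⁻¹ - zAΓ̃Aᵀ)⁻¹`, `Υ̃ = (Γ̃⁻¹ - zAᵀΓA)⁻¹` are entrywise
holomorphic there. -/
theorem stmt_5 (N n : ℕ) (A : Matrix (Fin N) (Fin n) ℝ)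
    (γ : Fin N → ℂ → ℂ) (γt : Fin n → ℂ → ℂ)
    (hγ : ∀ i, IsStieltjesPM (γ i)) (hγt : ∀ j, IsStieltjesPM (γt j)) :
    (∀ z ∈ offRplus,
      IsUnit ((Matrix.diagonal fun i => γ i z)⁻¹
        - z • (A.map Complex.ofReal * Matrix.diagonal (fun j => γt j z)
            * (A.map Complex.ofReal)ᵀ))
      ∧ IsUnit ((Matrix.diagonal fun j => γt j z)⁻¹
        - z • ((A.map Complex.ofReal)ᵀ * Matrix.diagonal (fun i => γ i z)
            * A.map Complex.ofReal)))
    ∧ (∀ i j : Fin N, DifferentiableOn ℂ (fun z => Tmat A γ γt z i j) offRplus)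
    ∧ (∀ i j : Fin n, DifferentiableOn ℂ (fun z => Ttmat A γ γt z i j) offRplus) := by
  refine ⟨fun z hz => ⟨isUnit_inv_diagonal_sub_smul_mul_diagonal_mul_transpose A hγ hγt hz, ?_⟩,
    differentiableOn_Tmat_apply A hγ hγt, ?_⟩
  · simpa only [transpose_map, transpose_transpose] using
      isUnit_inv_diagonal_sub_smul_mul_diagonal_mul_transpose Aᵀ hγt hγ hz
  · rw [Ttmat_eq_Tmat_transpose]
    exact differentiableOn_Tmat_apply Aᵀ hγt hγ
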